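/- Let (p̲^A_i, p̄^A_i)_{i=1}^n be a good coherent probability interval on E_A = {a_1,…,a_n} with associated standard good mass m_A, and for each i = 1,…,n let numbers p̲^i_j, p̄^i_j ∈ [0,1] with p̲^i_j ≤ p̄^i_j be given (j fixed). Define p̲^B_j = Σ_{V ⊆ E_A} m_A(V) ∏_{i : a_i ∈ V} p̲^i_j. Then p̲^B_j ≤ min Σ_{i=1}^n y_i x_i, where the minimum is over all x_i ∈ [p̲^A_i, p̄^A_i] with Σ_{i=1}^n x_i = 1 and all y_i ∈ [p̲^i_j, p̄^i_j]. -/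

import Mathlib

open Finset

/-- A Dempster–Shafer mass function on the finite type `α`:
nonnegative, at most one, vanishing on `∅`, and summing to one. -/
def IsMass {α : Type*} [Fintype α] [DecidableEq α] (m : Finset α → ℝ) : Prop :=
  m ∅ = 0 ∧ (∀ V : Finset α, 0 ≤ m V ∧ m V ≤ 1) ∧ (∑ V : Finset α, m V) = 1

/-- The belief function associated to a mass function: `Bel m W = ∑_{V ⊆ W} m V`. -/
def Bel {α : Type*} [Fintype α] [DecidableEq α] (m : Finset α → ℝ) (W : Finset α) : ℝ :=
  ∑ V ∈ Finset.univ.filter (fun V : Finset α => V ⊆ W), m V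

/-- The plausibility function associated to a mass function:
`Pl m W = ∑_{V ∩ W ≠ ∅} m V`. -/
def Pl {α : Type*} [Fintype α] [DecidableEq α] (m : Finset α → ℝ) (W : Finset α) : ℝ :=
  ∑ V ∈ Finset.univ.filter (fun V : Finset α => (V ∩ W).Nonempty), m V

/-- A coherent probability interval `(lo i, hi i)_{i}` on `Fin n`:
componentwise bounds `0 ≤ lo ≤ hi ≤ 1`, together with [Coh1], [Coh2], [Coh3]. -/
def IsCoherent {n : ℕ} (lo hi : Fin n → ℝ) : Prop :=
  (∀ i, 0 ≤ lo i ∧ lo i ≤ hi i ∧ hi i ≤ 1) ∧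
  (∑ i, lo i) ≤ 1 ∧ 1 ≤ (∑ i, hi i) ∧
  (∀ i, 1 - ∑ h ∈ Finset.univ.erase i, hi h ≤ lo i) ∧
  (∀ i, hi i ≤ 1 - ∑ h ∈ Finset.univ.erase i, lo h)

/-- `Δ = S̄ + (n-2)S̲ - (n-1)` for a probability interval. -/
def intervalDelta {n : ℕ} (lo hi : Fin n → ℝ) : ℝ :=
  (∑ i, hi i) + ((n : ℝ) - 2) * (∑ i, lo i) - ((n : ℝ) - 1)

/-- A *good* coherent probability interval: coherent and `Δ ≥ 0`. -/
def IsGood {n : ℕ} (lo hi : Fin n → ℝ) : Prop :=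
  IsCoherent lo hi ∧ 0 ≤ intervalDelta lo hi

/-- The standard good mass (SGM) associated to a (good coherent) probability interval:
mass `lo i` on each singleton `{a_i}`, mass `1 - hi i - ∑_{h ≠ i} lo h` on each
complement `univ ∖ {a_i}`, mass `Δ` on `univ`, and `0` on every other set. -/
def SGM {n : ℕ} (lo hi : Fin n → ℝ) (V : Finset (Fin n)) : ℝ :=
  (∑ i ∈ Finset.univ.filter (fun i : Fin n => V = {i}), lo i)
  + (∑ i ∈ Finset.univ.filter (fun i : Fin n => V = Finset.univ \ {i}),
      (1 - hi i - ∑ h ∈ Finset.univ.erase i, lo h))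
  + (if V = Finset.univ then intervalDelta lo hi else 0)

/-!
Expand `p̲ᴮⱼ` along the focal sets of the standard good mass. The singletons contribute
`∑ loA i * lo i`, matched by the part `loA i` of `x i`. The remaining masses, `c i` on `univ \ {i}`
and `Δ` on `univ`, add up to `1 - ∑ loA i = ∑ (x i - loA i)`, and the product of the `lo`s over a
focal set is at most the `lo` of any of its points; so it suffices to transport these masses onto
the surplus weights `x i - loA i`, each to a point of its focal set. With `k` a minimiser of `lo`,
the masses `c i` (`i ≠ k`) and `Δ` go to `k`, and `c k` fits into the surplus at the points
`i ≠ k` because `x k ≤ hiA k`.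
-/

lemma sum_sum_filter_eq_mul {ι κ R : Type*} [Fintype κ] [DecidableEq κ]
    [NonUnitalNonAssocSemiring R] (s : Finset ι) (c : ι → R) (b : ι → κ) (g : κ → R) :
    ∑ V, (∑ i ∈ s with V = b i, c i) * g V = ∑ i ∈ s, c i * g (b i) := by
  calc ∑ V, (∑ i ∈ s with V = b i, c i) * g V
      = ∑ V, ∑ i ∈ s with b i = V, c i * g (b i) := by
        refine sum_congr rfl fun V _ => ?_
        rw [sum_mul]
        exact sum_congr (by simp only [eq_comm]) fun i hi => by rw [(mem_filter.1 hi).2]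
    _ = ∑ i ∈ s, c i * g (b i) := sum_fiberwise s b _

lemma prod_le_of_mem_of_le_one {ι R : Type*} [CommSemiring R] [PartialOrder R] [IsOrderedRing R]
    {s : Finset ι} {f : ι → R} {i : ι} (h0 : ∀ j ∈ s, 0 ≤ f j) (h1 : ∀ j ∈ s, f j ≤ 1)
    (hi : i ∈ s) : ∏ j ∈ s, f j ≤ f i := by
  classical
  rw [← mul_prod_erase s f hi]
  exact mul_le_of_le_one_right (h0 i hi)
    (prod_le_one (fun j hj => h0 j (mem_of_mem_erase hj)) fun j hj => h1 j (mem_of_mem_erase hj))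

/-- Moving the mass `a` to the point `k` and `b` to the points `i ≠ k`, where `f ≥ M ≥ f k`. -/
lemma mul_add_mul_le_sum_mul {ι : Type*} [Fintype ι] [DecidableEq ι] {d f : ι → ℝ} {k : ι}
    {a b M : ℝ} (hd : ∀ i, 0 ≤ d i) (hkM : f k ≤ M) (hM : ∀ i ≠ k, M ≤ f i)
    (hb : b ≤ ∑ i ∈ univ.erase k, d i) (hab : a + b = ∑ i, d i) :
    a * f k + b * M ≤ ∑ i, d i * f i := by
  set s := ∑ i ∈ univ.erase k, d i
  have hrest : s * M ≤ ∑ i ∈ univ.erase k, d i * f i := by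
    rw [sum_mul]
    exact sum_le_sum fun i hi => mul_le_mul_of_nonneg_left (hM i (ne_of_mem_erase hi)) (hd i)
  have ha : a = d k + s - b := by linarith [add_sum_erase univ d (mem_univ k)]
  calc a * f k + b * M = d k * f k + (s - b) * f k + b * M := by rw [ha]; ring
    _ ≤ d k * f k + (s - b) * M + b * M := by gcongr
    _ = d k * f k + s * M := by ring
    _ ≤ ∑ i, d i * f i := by linarith [add_sum_erase univ (fun i => d i * f i) (mem_univ k)]

/-- The mass that `SGM lo hi` puts on `univ \ {i}`. -/
def complementMass {n : ℕ} (lo hi : Fin n → ℝ) (i : Fin n) : ℝ :=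
  1 - hi i - ∑ h ∈ univ.erase i, lo h

section complementMass

variable {n : ℕ} {lo hi : Fin n → ℝ}

lemma complementMass_nonneg (h : IsCoherent lo hi) (i : Fin n) : 0 ≤ complementMass lo hi i := by
  have := h.2.2.2.2 i
  unfold complementMass
  linarith

lemma sum_complementMass_add_intervalDelta :
    ∑ i, complementMass lo hi i + intervalDelta lo hi = 1 - ∑ i, lo i := by
  simp only [complementMass, intervalDelta, sum_erase_eq_sub (mem_univ _), sum_sub_distrib,
    sum_const, card_univ, Fintype.card_fin, nsmul_eq_mul]
  ring

lemma complementMass_le_sum_erase_sub {x : Fin n → ℝ} {k : Fin n} (hxk : x k ≤ hi k)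
    (hxs : ∑ i, x i = 1) : complementMass lo hi k ≤ ∑ i ∈ univ.erase k, (x i - lo i) := by
  rw [sum_sub_distrib, sum_erase_eq_sub (mem_univ k), hxs]
  unfold complementMass
  linarith

lemma sum_SGM_mul (g : Finset (Fin n) → ℝ) :
    ∑ V, SGM lo hi V * g V = ∑ i, lo i * g {i}
      + ∑ i, complementMass lo hi i * g (univ \ {i}) + intervalDelta lo hi * g univ := by
  simp only [SGM, add_mul, sum_add_distrib, sum_sum_filter_eq_mul, ite_mul, zero_mul,
    sum_ite_eq', mem_univ, if_true]
  rfl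

end complementMass

theorem sum_SGM_mul_prod_le_sum_mul {n : ℕ} {loA hiA lo x : Fin n → ℝ} (hA : IsGood loA hiA)
    (hlo : ∀ i, 0 ≤ lo i ∧ lo i ≤ 1) (hx : ∀ i, loA i ≤ x i ∧ x i ≤ hiA i)
    (hxs : ∑ i, x i = 1) :
    ∑ V, SGM loA hiA V * ∏ i ∈ V, lo i ≤ ∑ i, lo i * x i := by
  obtain ⟨k, -, hk⟩ := exists_min_image univ lo
    (nonempty_of_sum_ne_zero (hxs ▸ one_ne_zero : ∑ i, x i ≠ 0))
  rw [sum_SGM_mul, ← add_sum_erase univ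
    (fun i => complementMass loA hiA i * ∏ h ∈ univ \ {i}, lo h) (mem_univ k)]
  simp only [prod_singleton]
  set c := complementMass loA hiA
  set q : Fin n → ℝ := fun i => ∏ h ∈ univ \ {i}, lo h
  have prod_le : ∀ (s : Finset (Fin n)) i, i ∈ s → ∏ h ∈ s, lo h ≤ lo i := fun s i =>
    prod_le_of_mem_of_le_one (fun j _ => (hlo j).1) fun j _ => (hlo j).2
  have hq : ∀ i j, j ≠ i → q i ≤ lo j := fun i j hji => prod_le _ j (by simp [hji])
  have hc := complementMass_nonneg hA.1
  have hmoved : ∑ i ∈ univ.erase k, c i * q i + intervalDelta loA hiA * ∏ i, lo i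
      ≤ (∑ i ∈ univ.erase k, c i + intervalDelta loA hiA) * lo k := by
    rw [add_mul, sum_mul]
    gcongr with i hi
    · exact hc i
    · exact hq i k (ne_of_mem_erase hi).symm
    · exact hA.2
    · exact prod_le univ k (mem_univ k)
  have hck : c k * q k ≤ c k * max (q k) (lo k) := by gcongr; exacts [hc k, le_max_left _ _]
  have hfree := mul_add_mul_le_sum_mul (d := fun i => x i - loA i) (f := lo) (k := k)
    (a := ∑ i ∈ univ.erase k, c i + intervalDelta loA hiA) (M := max (q k) (lo k))
    (fun i => sub_nonneg.2 (hx i).1) (le_max_right _ _)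
    (fun i hi => max_le (hq k i hi) (hk i (mem_univ i)))
    (complementMass_le_sum_erase_sub (hx k).2 hxs)
    (by rw [sum_sub_distrib, hxs, ← sum_complementMass_add_intervalDelta,
      ← add_sum_erase univ c (mem_univ k)]; ring)
  have hx_split : ∑ i, lo i * x i = ∑ i, loA i * lo i + ∑ i, (x i - loA i) * lo i := by
    rw [← sum_add_distrib]
    exact sum_congr rfl fun i _ => by ring
  linarith

/-- Let `(loA, hiA)` be a good coherent probability interval on
`E_A = Fin n` with standard good mass `mA = SGM loA hiA`, and for a fixed `j` let
`lo i ≤ hi i` in `[0,1]` be conditional bounds. Then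
`p̲ᴮⱼ = ∑_{V ⊆ E_A} mA(V) ∏_{i ∈ V} lo i` is below `∑ᵢ yᵢ xᵢ` for every choice of
`xᵢ ∈ [loA i, hiA i]` with `∑ᵢ xᵢ = 1` and `yᵢ ∈ [lo i, hi i]`; that is, it is a
lower bound on the credal minimum. -/
theorem sgm_lower_is_credal_lower_bound (n : ℕ) (loA hiA : Fin n → ℝ)
    (hA : IsGood loA hiA)
    (lo hi : Fin n → ℝ) (hbd : ∀ i, 0 ≤ lo i ∧ lo i ≤ hi i ∧ hi i ≤ 1)
    (x : Fin n → ℝ) (hx : ∀ i, loA i ≤ x i ∧ x i ≤ hiA i) (hxs : (∑ i, x i) = 1)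
    (y : Fin n → ℝ) (hy : ∀ i, lo i ≤ y i ∧ y i ≤ hi i) :
    (∑ V : Finset (Fin n), SGM loA hiA V * ∏ i ∈ V, lo i) ≤ ∑ i, y i * x i := by
  have hlo : ∀ i, 0 ≤ lo i ∧ lo i ≤ 1 := fun i => ⟨(hbd i).1, (hbd i).2.1.trans (hbd i).2.2⟩
  calc _ ≤ ∑ i, lo i * x i := sum_SGM_mul_prod_le_sum_mul hA hlo hx hxs
    _ ≤ ∑ i, y i * x i := sum_le_sum fun i _ =>
      mul_le_mul_of_nonneg_right (hy i).1 ((hA.1.1 i).1.trans (hx i).1)
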